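/- Let K be a locally finitely presentable category whose full subcategory K_ω of finitely presentable objects is closed under finite limits, and let T_i be the codensity monad of the inclusion i : K_ω ⊂ K. Then there is an adjunction between the Eilenberg–Moore category Alg(T_i) and the Pro-completion Pro K_ω, with right adjoint C : Pro K_ω → Alg(T_i) lifting the restricted Isbell functor 𝒮 : Pro K_ω → K ≃ Ind K_ω. -/

import Mathlib

/-!
For a `T`-algebra `A`, the copresheaf `a ↦ Alg(A, (i a, ε_a))` on `K_ω` is left exact: the
functor `a ↦ (i a, ε_a)` into `Alg(T)` preserves finite limits, because `K_ω` is closed under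
finite limits in `K` and the forgetful functor `Alg(T) ⥤ K` creates limits. This copresheaf is
the object `L A` of `Pro K_ω`. Dually, `𝒮 = Ran_{y♯} i` carries a canonical `T`-action, and the
pointwise limit cones computing it are cones of algebra maps into the canonical algebras, hence
limit cones in `Alg(T)`. So a morphism `L A ⟶ Q`, i.e. a natural transformation
`Q ⟶ Alg(A, (i -, ε))`, is a cone from `A` over the elements of `Q`, i.e. an algebra map
`A ⟶ 𝒮 Q`, naturally in `Q`.
-/

namespace CategoryTheory

open Functor Limits

noncomputable section

universe w w₂ v v₂ u u₂

namespace Codensity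

variable {C : Type u} [Category.{v} C] {D : Type u₂} [Category.{v₂} D]
  (F : C ⥤ D) [F.HasRightKanExtension F]

/-- The underlying endofunctor of the codensity monad of `F`: the right Kan
extension of `F` along itself. -/
abbrev T : D ⥤ D := F.rightKanExtension F

/-- The counit of the right Kan extension. -/
abbrev ε : F ⋙ T F ⟶ F := F.rightKanExtensionCounit F

/-- The unit of the codensity monad. -/
def unit : 𝟭 D ⟶ T F :=
  (T F).liftOfIsRightKanExtension (ε F) (𝟭 D) F.rightUnitor.hom

/-- The multiplication of the codensity monad. -/
def mul : T F ⋙ T F ⟶ T F :=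
  (T F).liftOfIsRightKanExtension (ε F) (T F ⋙ T F)
    ((Functor.associator F (T F) (T F)).inv ≫ whiskerRight (ε F) (T F) ≫ ε F)

lemma unit_fac (X : C) : (unit F).app (F.obj X) ≫ (ε F).app X = 𝟙 (F.obj X) := by
  simp [unit]

lemma mul_fac (X : C) :
    (mul F).app (F.obj X) ≫ (ε F).app X
      = (T F).map ((ε F).app X) ≫ (ε F).app X := by
  have h := (T F).liftOfIsRightKanExtension_fac_app (ε F)
    (T F ⋙ T F) ((Functor.associator F (T F) (T F)).inv ≫ whiskerRight (ε F) (T F) ≫ ε F) X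
  simp only [NatTrans.comp_app, Functor.associator_inv_app, whiskerRight_app,
    Functor.comp_obj, Category.id_comp] at h
  simpa [mul] using h

lemma left_unit' : whiskerLeft (T F) (unit F) ≫ mul F = (T F).rightUnitor.hom := by
  apply (T F).hom_ext_of_isRightKanExtension (ε F)
  ext X
  have h := (unit F).naturality ((ε F).app X)
  simp only [Functor.comp_obj, Functor.id_obj, Functor.id_map] at h
  simp only [NatTrans.comp_app, whiskerLeft_app, Functor.rightUnitor_hom_app,
    Functor.comp_obj, Functor.id_obj, Category.id_comp, Category.assoc]
  rw [mul_fac, ← Category.assoc, ← h, Category.assoc, unit_fac]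
  simp

lemma right_unit' : whiskerRight (unit F) (T F) ≫ mul F = (T F).leftUnitor.hom := by
  apply (T F).hom_ext_of_isRightKanExtension (ε F)
  ext X
  simp only [NatTrans.comp_app, whiskerRight_app, whiskerLeft_app, Functor.leftUnitor_hom_app,
    Functor.comp_obj, Functor.id_obj, Category.id_comp, Category.assoc]
  rw [mul_fac, ← Category.assoc, ← Functor.map_comp, unit_fac]
  simp

lemma assoc' :
    whiskerRight (mul F) (T F) ≫ mul F
      = (Functor.associator _ _ _).hom ≫ whiskerLeft (T F) (mul F) ≫ mul F := by
  apply (T F).hom_ext_of_isRightKanExtension (ε F)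
  ext X
  have h := (mul F).naturality ((ε F).app X)
  simp only [Functor.comp_obj, Functor.comp_map] at h
  simp only [NatTrans.comp_app, whiskerRight_app, whiskerLeft_app, Functor.associator_hom_app,
    Functor.comp_obj, Category.id_comp, Category.assoc]
  conv_lhs => rw [mul_fac, ← Category.assoc, ← Functor.map_comp, mul_fac, Functor.map_comp,
    Category.assoc]
  conv_rhs => rw [mul_fac, ← Category.assoc, ← h, Category.assoc, mul_fac]

end Codensity

/-- The codensity monad of a functor `F`, defined as the right Kan extension of `F`
along itself, with its canonical monad structure. -/
def codensityMonad {C : Type u} [Category.{v} C] {D : Type u₂} [Category.{v₂} D]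
    (F : C ⥤ D) [F.HasRightKanExtension F] : Monad D where
  toFunctor := Codensity.T F
  η := Codensity.unit F
  μ := Codensity.mul F
  left_unit X := by
    simpa using NatTrans.congr_app (Codensity.left_unit' F) X
  right_unit X := by
    simpa using NatTrans.congr_app (Codensity.right_unit' F) X
  assoc X := by
    simpa using NatTrans.congr_app (Codensity.assoc' F) X

namespace Presheaf

/-- The restricted Yoneda functor `ℰ ⥤ Cᵒᵖ ⥤ Type v` along `A : C ⥤ ℰ` (no longer in Mathlib;
reinstated with its former definition). -/
def restrictedYoneda {C : Type u} [Category.{v} C] {ℰ : Type u₂} [Category.{v} ℰ]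
    (A : C ⥤ ℰ) : ℰ ⥤ Cᵒᵖ ⥤ Type v :=
  yoneda ⋙ (whiskeringLeft _ _ (Type v)).obj (Functor.op A)

end Presheaf

end

end CategoryTheory

universe v' u'

open CategoryTheory Functor Limits

noncomputable section

variable (K : Type v') [Category.{u'} K]

/-- An object is finitely presentable if its covariant hom-functor preserves filtered
colimits. -/
def FinitelyPresentable (k : K) : Prop :=
  PreservesFilteredColimitsOfSize.{u', u'} (coyoneda.obj (Opposite.op k))

/-- The full subcategory `K_ω ⊆ K` of finitely presentable objects. -/
abbrev KFin := ObjectProperty.FullSubcategory (fun k : K => FinitelyPresentable K k)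

/-- The inclusion `i : K_ω ⥤ K`. -/
abbrev iFin : KFin K ⥤ K := ObjectProperty.ι _

/-- The copresheaf embedding of `K_ω`. -/
def ysharpFin : KFin K ⥤ (KFin K ⥤ Type u')ᵒᵖ := coyoneda.rightOp

/-- The Pro-completion `Pro K_ω = (Lex(K_ω, Set))ᵒᵖ`. -/
abbrev ProFin := (ObjectProperty.FullSubcategory (fun Q : KFin K ⥤ Type u' => PreservesFiniteLimits Q))ᵒᵖ

/-- The inclusion `Pro K_ω ⊆ (Set^{K_ω})ᵒᵖ`. -/
abbrev iotaProFin : ProFin K ⥤ (KFin K ⥤ Type u')ᵒᵖ := (ObjectProperty.ι _).op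


namespace CategoryTheory

open Opposite

universe w v₁ v₂ v₃ u₁ u₂ u₃

instance locallySmall_functor_of_essentiallySmall {C : Type u₁} [Category.{v₁} C]
    [EssentiallySmall.{w} C] {D : Type u₂} [Category.{v₂} D] [LocallySmall.{w} D] :
    LocallySmall.{w} (C ⥤ D) :=
  (locallySmall_congr (equivSmallModel.{w} C).congrLeft).mpr inferInstance

instance Functor.hasPointwiseRightKanExtension_of_essentiallySmall {A : Type u₁}
    [Category.{v₁} A] {B : Type u₂} [Category.{v₂} B] {E : Type u₃} [Category.{v₃} E]
    [EssentiallySmall.{w} A] [LocallySmall.{w} E] [HasLimitsOfSize.{w, w} B]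
    (L : A ⥤ E) (F : A ⥤ B) : L.HasPointwiseRightKanExtension F := fun Y =>
  have := hasLimitsOfShape_of_essentiallySmall (StructuredArrow Y L) B
  inferInstance

section ConesOverElements

variable {A : Type u₁} [Category.{v₁} A] {D : Type u₂} [Category.{v₁} D]

lemma StructuredArrow.cone_app_mk_comp_map {E : Type u₃} [Category.{v₃} E] {L : A ⥤ E}
    {G : A ⥤ D} {Y : E} {d : D} (π : (Functor.const _).obj d ⟶ StructuredArrow.proj Y L ⋙ G)
    {a b : A} (h : Y ⟶ L.obj a) (f : a ⟶ b) {h' : Y ⟶ L.obj b} (w : h ≫ L.map f = h') :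
    π.app (StructuredArrow.mk h') = π.app (StructuredArrow.mk h) ≫ G.map f := by
  subst w
  have := π.naturality (StructuredArrow.homMk' (StructuredArrow.mk h) f)
  dsimp at this
  rwa [Category.id_comp] at this

/-- `StructuredArrow Y coyoneda.rightOp` is the category of elements of `Y.unop`. -/
def coneHomEquivCoyonedaElements (G : A ⥤ D) (Y : (A ⥤ Type v₁)ᵒᵖ) (d : D) :
    ((Functor.const _).obj d ⟶ StructuredArrow.proj Y coyoneda.rightOp ⋙ G) ≃
      (Y.unop ⟶ G ⋙ coyoneda.obj (op d)) where
  toFun π :=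
    { app a := TypeCat.ofHom fun x => π.app (StructuredArrow.mk (coyonedaEquiv.symm x).op)
      naturality a b f := by
        ext x
        have w : (coyonedaEquiv.symm x).op ≫ coyoneda.rightOp.map f
            = (coyonedaEquiv.symm (Y.unop.map f x)).op := by
          rw [coyonedaEquiv_symm_map]; rfl
        exact StructuredArrow.cone_app_mk_comp_map π _ f w }
  invFun α :=
    { app g := α.app g.right (coyonedaEquiv (F := Y.unop) (X := g.right) g.hom.unop)
      naturality g g' φ := by
        have w : coyonedaEquiv (F := Y.unop) (X := g'.right) g'.hom.unop
            = Y.unop.map φ.right (coyonedaEquiv g.hom.unop) := by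
          rw [← StructuredArrow.w φ, coyonedaEquiv_naturality]; rfl
        simp only [w, NatTrans.naturality_apply]
        exact Category.id_comp _ }
  left_inv π := by
    ext g
    obtain ⟨a, f, rfl⟩ := StructuredArrow.mk_surjective g
    show π.app (StructuredArrow.mk (coyonedaEquiv.symm (coyonedaEquiv f.unop)).op) = _
    rw [Equiv.symm_apply_apply]
    rfl
  right_inv α := by
    ext a x
    simp

end ConesOverElements

namespace Codensity

variable {A : Type u₁} [Category.{v₁} A] {B : Type u₂} [Category.{v₂} B]
  (F : A ⥤ B) [F.HasRightKanExtension F]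

def canonicalAlgebra : A ⥤ (codensityMonad F).Algebra where
  obj a :=
    { A := F.obj a
      a := (ε F).app a
      unit := unit_fac F a
      assoc := mul_fac F a }
  map f :=
    { f := F.map f
      h := (ε F).naturality f }

lemma preservesFiniteLimits_canonicalAlgebra [PreservesFiniteLimits F] :
    PreservesFiniteLimits (canonicalAlgebra F) :=
  have : PreservesFiniteLimits (canonicalAlgebra F ⋙ Monad.forget _) :=
    ‹PreservesFiniteLimits F›
  preservesFiniteLimits_of_reflects_of_preserves _ (Monad.forget _)

variable {E : Type u₃} [Category.{v₃} E] (L : A ⥤ E) [L.HasRightKanExtension F]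

def ranAction : L.rightKanExtension F ⋙ T F ⟶ L.rightKanExtension F :=
  (L.rightKanExtension F).liftOfIsRightKanExtension (L.rightKanExtensionCounit F) _
    ((Functor.associator _ _ _).inv ≫ whiskerRight (L.rightKanExtensionCounit F) (T F) ≫ ε F)

lemma ranAction_fac (a : A) :
    (ranAction F L).app (L.obj a) ≫ (L.rightKanExtensionCounit F).app a
      = (T F).map ((L.rightKanExtensionCounit F).app a) ≫ (ε F).app a := by
  simp [ranAction]

lemma ranAction_unit (Y : E) :
    (unit F).app ((L.rightKanExtension F).obj Y) ≫ (ranAction F L).app Y = 𝟙 _ := by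
  have key : whiskerLeft (L.rightKanExtension F) (unit F) ≫ ranAction F L
      = (L.rightKanExtension F).rightUnitor.hom := by
    apply (L.rightKanExtension F).hom_ext_of_isRightKanExtension (L.rightKanExtensionCounit F)
    ext a
    have h := (unit F).naturality_assoc ((L.rightKanExtensionCounit F).app a) ((ε F).app a)
    simp only [Functor.id_obj, Functor.id_map, unit_fac, Category.comp_id] at h
    simpa [ranAction_fac] using h.symm
  simpa using NatTrans.congr_app key Y

lemma ranAction_assoc (Y : E) :
    (mul F).app ((L.rightKanExtension F).obj Y) ≫ (ranAction F L).app Y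
      = (T F).map ((ranAction F L).app Y) ≫ (ranAction F L).app Y := by
  have key : (Functor.associator _ (T F) (T F)).hom ≫
        whiskerLeft (L.rightKanExtension F) (mul F) ≫ ranAction F L
      = whiskerRight (ranAction F L) (T F) ≫ ranAction F L := by
    apply (L.rightKanExtension F).hom_ext_of_isRightKanExtension (L.rightKanExtensionCounit F)
    ext a
    have h := (mul F).naturality_assoc ((L.rightKanExtensionCounit F).app a) ((ε F).app a)
    simp only [Functor.comp_obj, Functor.comp_map, mul_fac] at h
    simp only [NatTrans.comp_app, Functor.associator_hom_app, whiskerLeft_app, whiskerRight_app,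
      Functor.comp_obj, Category.id_comp, Category.assoc, ranAction_fac]
    rw [← Functor.map_comp_assoc, ranAction_fac, Functor.map_comp_assoc, h]
  simpa using NatTrans.congr_app key Y

def ranAlgebra : E ⥤ (codensityMonad F).Algebra where
  obj Y :=
    { A := (L.rightKanExtension F).obj Y
      a := (ranAction F L).app Y
      unit := ranAction_unit F L Y
      assoc := ranAction_assoc F L Y }
  map f :=
    { f := (L.rightKanExtension F).map f
      h := (ranAction F L).naturality f }

def ranAlgebraCone (Y : E) : Cone (StructuredArrow.proj Y L ⋙ canonicalAlgebra F) where
  pt := (ranAlgebra F L).obj Y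
  π.app g :=
    { f := (L.rightKanExtension F).map g.hom ≫ (L.rightKanExtensionCounit F).app g.right
      h := by
        show (T F).map (_ ≫ _) ≫ (ε F).app g.right = (ranAction F L).app Y ≫ _ ≫ _
        rw [Functor.map_comp, Category.assoc, ← ranAction_fac,
          ← reassoc_of% ((ranAction F L).naturality g.hom)] }
  π.naturality g g' φ := by
    ext
    dsimp
    rw [Category.id_comp]
    show (L.rightKanExtension F).map g'.hom ≫ (L.rightKanExtensionCounit F).app g'.right
      = ((L.rightKanExtension F).map g.hom ≫ (L.rightKanExtensionCounit F).app g.right) ≫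
        F.map φ.right
    rw [← StructuredArrow.w φ, Functor.map_comp, Category.assoc, Category.assoc]
    exact congrArg (_ ≫ ·) ((L.rightKanExtensionCounit F).naturality φ.right)

lemma ranAlgebra_map_comp_ranAlgebraCone_π {Y Y' : E} (m : Y ⟶ Y') (g : StructuredArrow Y' L) :
    (ranAlgebra F L).map m ≫ (ranAlgebraCone F L Y').π.app g
      = (ranAlgebraCone F L Y).π.app (StructuredArrow.mk (m ≫ g.hom)) := by
  ext
  show (L.rightKanExtension F).map m ≫ (L.rightKanExtension F).map g.hom ≫ _
    = (L.rightKanExtension F).map (m ≫ g.hom) ≫ _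
  rw [Functor.map_comp]
  exact (Category.assoc _ _ _).symm

def isLimitRanAlgebraCone [L.HasPointwiseRightKanExtension F] (Y : E) :
    IsLimit (ranAlgebraCone F L Y) :=
  isLimitOfReflects (Monad.forget _)
    (isPointwiseRightKanExtensionOfIsRightKanExtension _ (L.rightKanExtensionCounit F) Y)

end Codensity

end CategoryTheory

open Opposite

lemma finitelyPresentable_of_iso {X Y : K} (e : X ≅ Y) (h : FinitelyPresentable K X) :
    FinitelyPresentable K Y where
  preserves_filtered_colimits J _ _ :=
    have := h.preserves_filtered_colimits J
    preservesColimitsOfShape_of_natIso (coyoneda.mapIso e.op).symm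

instance : ObjectProperty.IsClosedUnderIsomorphisms (FinitelyPresentable K) :=
  ⟨finitelyPresentable_of_iso K⟩

section

variable {K}

lemma preservesFiniteLimits_iFin [HasLimitsOfSize.{u', u'} K]
    (hclosed : ∀ (J : Type u') (_ : SmallCategory J) (_ : FinCategory J) (D : J ⥤ K),
      (∀ j, FinitelyPresentable K (D.obj j)) → FinitelyPresentable K (limit D)) :
    PreservesFiniteLimits (iFin K) :=
  preservesFiniteLimits_of_preservesFiniteLimitsOfSize _ fun J _ _ =>
    have : ObjectProperty.IsClosedUnderLimitsOfShape (FinitelyPresentable K) J :=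
      .mk' fun _ ⟨D, hD⟩ => hclosed J _ ‹_› D hD
    inferInstance

def proFinOfAlgebra [(iFin K).HasRightKanExtension (iFin K)] [PreservesFiniteLimits (iFin K)]
    (A : (codensityMonad (iFin K)).Algebra) : ProFin K :=
  have := Codensity.preservesFiniteLimits_canonicalAlgebra (iFin K)
  op ⟨Codensity.canonicalAlgebra (iFin K) ⋙ coyoneda.obj (op A),
    comp_preservesFiniteLimits _ _⟩

variable (K) in
abbrev isbellAlgebra [(iFin K).HasRightKanExtension (iFin K)]
    [(ysharpFin K).HasRightKanExtension (iFin K)] :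
    ProFin K ⥤ (codensityMonad (iFin K)).Algebra :=
  iotaProFin K ⋙ Codensity.ranAlgebra (iFin K) (ysharpFin K)

variable [(iFin K).HasRightKanExtension (iFin K)] [(ysharpFin K).HasRightKanExtension (iFin K)]
  [(ysharpFin K).HasPointwiseRightKanExtension (iFin K)] [PreservesFiniteLimits (iFin K)]

def proFinHomEquiv (A : (codensityMonad (iFin K)).Algebra) (Q : ProFin K) :
    (proFinOfAlgebra A ⟶ Q) ≃ (A ⟶ (isbellAlgebra K).obj Q) :=
  (opEquiv _ _).trans <| (ObjectProperty.fullyFaithfulι _).homEquiv.trans <|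
    (coneHomEquivCoyonedaElements _ _ _).symm.trans
      (Codensity.isLimitRanAlgebraCone (iFin K) (ysharpFin K) _).homEquiv.symm

lemma proFinHomEquiv_comp_π (A : (codensityMonad (iFin K)).Algebra) {Q : ProFin K}
    (h : proFinOfAlgebra A ⟶ Q) (j : StructuredArrow ((iotaProFin K).obj Q) (ysharpFin K)) :
    proFinHomEquiv A Q h ≫ (Codensity.ranAlgebraCone (iFin K) (ysharpFin K) _).π.app j
      = h.unop.hom.app j.right (coyonedaEquiv (F := Q.unop.obj) (X := j.right) j.hom.unop) :=
  IsLimit.homEquiv_symm_π_app _ _ j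

lemma proFinHomEquiv_naturality (A : (codensityMonad (iFin K)).Algebra) {Q Q' : ProFin K}
    (g : Q ⟶ Q') (h : proFinOfAlgebra A ⟶ Q) :
    proFinHomEquiv A Q' (h ≫ g) = proFinHomEquiv A Q h ≫ (isbellAlgebra K).map g := by
  apply (Codensity.isLimitRanAlgebraCone (iFin K) (ysharpFin K) _).hom_ext
  intro j
  erw [proFinHomEquiv_comp_π, Category.assoc, Codensity.ranAlgebra_map_comp_ranAlgebraCone_π,
    proFinHomEquiv_comp_π]
  simp only [unop_comp, ObjectProperty.FullSubcategory.comp_hom, NatTrans.comp_app, comp_apply]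
  rfl

end

theorem algebras_of_codensity_adjunction_with_pro_completion
    -- `K` is locally finitely presentable: it is cocomplete (hence also complete), and
    -- `K_ω` is essentially small and dense in `K`:
    [HasLimitsOfSize.{u', u'} K]
    [EssentiallySmall.{u'} (KFin K)]
    -- `K_ω` is closed under finite limits in `K`:
    (hclosed : ∀ (J : Type u') (_ : SmallCategory J) (_ : FinCategory J) (D : J ⥤ K),
      (∀ j, FinitelyPresentable K (D.obj j)) → FinitelyPresentable K (limit D))
    -- the relevant right Kan extensions exist:
    [(iFin K).HasRightKanExtension (iFin K)]
    [(ysharpFin K).HasRightKanExtension (iFin K)] :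
    Nonempty (Σ' (L : (codensityMonad (iFin K)).Algebra ⥤ ProFin K)
      (C : ProFin K ⥤ (codensityMonad (iFin K)).Algebra) (_ : L ⊣ C),
        -- the right adjoint `C` lifts the restricted Isbell functor `𝒮`:
        C ⋙ (codensityMonad (iFin K)).forget ≅
          iotaProFin K ⋙ (ysharpFin K).rightKanExtension (iFin K)) := by
  have := preservesFiniteLimits_iFin hclosed
  exact ⟨⟨_, isbellAlgebra K,
    Adjunction.adjunctionOfEquivLeft proFinHomEquiv
      fun A _ _ g h => proFinHomEquiv_naturality A g h,
    Iso.refl _⟩⟩
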